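/- Let p₀/q₀ = a/b be a reduced fraction with a ∈ ℤ, b ∈ ℕ, b ≤ x for some real x > 0. Then the jump of the function B_x at a/b satisfies B_x⁺(a/b) - B_x⁻(a/b) = -(1/x)·⌊x/b⌋, where B_x(t) = (1/x)·Σ_{1 ≤ k ≤ ⌊x⌋} β(kt), β(t) = t - ⌊t⌋ - 1/2, and B_x^± denote one-sided limits. -/

import Mathlib

noncomputable def beta (t : ℝ) : ℝ := t - ⌊t⌋ - 1/2

noncomputable def B (x : ℝ) (t : ℝ) : ℝ :=
  (1/x) * ∑ k ∈ Finset.Icc 1 ⌊x⌋₊, beta (k * t)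

/-
Each summand β(kt) = fract(kt) - 1/2 is right-continuous, and continuous from the left except
where kt is an integer, where its left limit exceeds its value by 1. For t = a/b in lowest terms,
k·a/b is an integer exactly when b ∣ k, and [1, ⌊x⌋] contains ⌊x⌋ / b = ⌊x/b⌋ multiples of b.
-/

open Filter Topology Finset

lemma beta_eq_fract_sub (t : ℝ) : beta t = Int.fract t - 1/2 := rfl

lemma tendsto_beta_nhdsGT (y : ℝ) : Tendsto beta (𝓝[>] y) (𝓝 (beta y)) := by
  have hcont : ContinuousWithinAt Int.fract (Set.Ici y) y :=
    ((continuousOn_fract ⌊y⌋).continuousWithinAt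
      ⟨Int.floor_le y, Int.lt_floor_add_one y⟩).mono_of_mem_nhdsWithin
      (mem_of_superset (Ico_mem_nhdsGE (Int.lt_floor_add_one y))
        (Set.Ico_subset_Ico_left (Int.floor_le y)))
  simp only [funext beta_eq_fract_sub]
  exact ((hcont.mono Set.Ioi_subset_Ici_self).sub continuousWithinAt_const).tendsto

lemma tendsto_beta_nhdsLT_intCast (m : ℤ) : Tendsto beta (𝓝[<] (m : ℝ)) (𝓝 (beta m + 1)) := by
  have hval : beta m + 1 = 1 - 1/2 := by simp [beta_eq_fract_sub]; norm_num
  rw [hval, funext beta_eq_fract_sub]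
  exact (tendsto_fract_left' m).sub tendsto_const_nhds

lemma tendsto_beta_nhdsLT_of_fract_ne_zero {y : ℝ} (hy : Int.fract y ≠ 0) :
    Tendsto beta (𝓝[<] y) (𝓝 (beta y)) := by
  have hcont : ContinuousAt Int.fract y :=
    continuousAt_fract fun h => hy (by rw [Int.fract, ← h, sub_self])
  simp only [funext beta_eq_fract_sub]
  exact ((hcont.sub continuousAt_const).tendsto).mono_left nhdsWithin_le_nhds

lemma tendsto_beta_nhdsLT (y : ℝ) :
    Tendsto beta (𝓝[<] y) (𝓝 (beta y + if Int.fract y = 0 then 1 else 0)) := by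
  split_ifs with hy
  · obtain ⟨m, rfl⟩ := Int.fract_eq_zero_iff.mp hy
    exact tendsto_beta_nhdsLT_intCast m
  · simpa using tendsto_beta_nhdsLT_of_fract_ne_zero hy

lemma tendsto_const_mul_nhdsGT {k : ℝ} (hk : 0 < k) (s : ℝ) :
    Tendsto (k * ·) (𝓝[>] s) (𝓝[>] (k * s)) :=
  (continuous_const_mul k).continuousWithinAt.tendsto_nhdsWithin
    fun _ ht => mul_lt_mul_of_pos_left ht hk

lemma tendsto_const_mul_nhdsLT {k : ℝ} (hk : 0 < k) (s : ℝ) :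
    Tendsto (k * ·) (𝓝[<] s) (𝓝[<] (k * s)) :=
  (continuous_const_mul k).continuousWithinAt.tendsto_nhdsWithin
    fun _ ht => mul_lt_mul_of_pos_left ht hk

lemma natCast_pos_of_mem_Icc_one {k n : ℕ} (hk : k ∈ Icc 1 n) : (0 : ℝ) < k := by
  exact_mod_cast (mem_Icc.mp hk).1

lemma tendsto_B_nhdsGT (x s : ℝ) : Tendsto (B x) (𝓝[>] s) (𝓝 (B x s)) :=
  (tendsto_finsetSum _ fun _ hk => (tendsto_beta_nhdsGT _).comp
    (tendsto_const_mul_nhdsGT (natCast_pos_of_mem_Icc_one hk) s)).const_mul (1/x)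

lemma tendsto_B_nhdsLT (x s : ℝ) :
    Tendsto (B x) (𝓝[<] s)
      (𝓝 (B x s + (1/x) * #{k ∈ Icc 1 ⌊x⌋₊ | Int.fract (((k : ℕ) : ℝ) * s) = 0})) := by
  have hlim : B x s + (1/x) * #{k ∈ Icc 1 ⌊x⌋₊ | Int.fract (((k : ℕ) : ℝ) * s) = 0} =
      (1/x) * ∑ k ∈ Icc 1 ⌊x⌋₊,
        (beta (k * s) + if Int.fract ((k : ℝ) * s) = 0 then 1 else 0) := by
    rw [sum_add_distrib, sum_boole, mul_add, B]
  rw [hlim]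
  exact (tendsto_finsetSum _ fun _ hk => (tendsto_beta_nhdsLT _).comp
    (tendsto_const_mul_nhdsLT (natCast_pos_of_mem_Icc_one hk) s)).const_mul (1/x)

lemma fract_natCast_mul_div_eq_zero_iff {a : ℤ} {b : ℕ} (hb : b ≠ 0) (hab : IsCoprime a b)
    (k : ℕ) : Int.fract ((k : ℝ) * (a / b)) = 0 ↔ b ∣ k := by
  have hb' : (b : ℝ) ≠ 0 := by exact_mod_cast hb
  have hdvd : (b : ℤ) ∣ k * a ↔ b ∣ k := by
    rw [← Int.natCast_dvd_natCast]
    exact ⟨hab.symm.dvd_of_dvd_mul_right, fun h => h.mul_right a⟩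
  rw [Int.fract_eq_zero_iff, ← hdvd]
  refine exists_congr fun m => ?_
  rw [← mul_div_assoc, eq_div_iff hb', eq_comm, mul_comm (m : ℝ)]
  exact_mod_cast Iff.rfl

lemma card_filter_dvd_Icc (n b : ℕ) : #{k ∈ Icc 1 n | b ∣ k} = n / b :=
  Nat.Ioc_filter_dvd_card_eq_div n b

theorem stmt_7_general (a : ℤ) (b : ℕ) (hb : 1 ≤ b) (hab : Int.gcd a b = 1)
    (x : ℝ)
    (Lp Lm : ℝ)
    (hLp : Filter.Tendsto (fun t => B x t)
      (nhdsWithin ((a : ℝ)/b) (Set.Ioi ((a : ℝ)/b))) (nhds Lp))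
    (hLm : Filter.Tendsto (fun t => B x t)
      (nhdsWithin ((a : ℝ)/b) (Set.Iio ((a : ℝ)/b))) (nhds Lm)) :
    Lp - Lm = -(1/x) * ⌊x / b⌋₊ := by
  have hcount : #{k ∈ Icc 1 ⌊x⌋₊ | Int.fract (((k : ℕ) : ℝ) * (a / b)) = 0} = ⌊x / b⌋₊ := by
    rw [Nat.floor_div_natCast, ← card_filter_dvd_Icc]
    exact congrArg card (filter_congr fun k _ =>
      fract_natCast_mul_div_eq_zero_iff (by omega) (Int.isCoprime_iff_gcd_eq_one.mpr hab) k)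
  rw [tendsto_nhds_unique hLp (tendsto_B_nhdsGT x _),
    tendsto_nhds_unique hLm (tendsto_B_nhdsLT x _), hcount]
  ring

theorem stmt_7 (a : ℤ) (b : ℕ) (hb : 1 ≤ b) (hab : Int.gcd a b = 1)
    (x : ℝ) (hbx : (b : ℝ) ≤ x)
    (Lp Lm : ℝ)
    (hLp : Filter.Tendsto (fun t => B x t)
      (nhdsWithin ((a : ℝ)/b) (Set.Ioi ((a : ℝ)/b))) (nhds Lp))
    (hLm : Filter.Tendsto (fun t => B x t)
      (nhdsWithin ((a : ℝ)/b) (Set.Iio ((a : ℝ)/b))) (nhds Lm)) :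
    Lp - Lm = -(1/x) * ⌊x / b⌋₊ :=
  stmt_7_general a b hb hab x Lp Lm hLp hLm
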